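/- arXiv:1704.06111 — 8 statements merged into one kernel-verified Lean document; each statement's English description precedes it below -/
import Mathlib

section
/- Let Ω be a set with involutive permutations τ_e of Ω for each e ∈ Ω satisfying τ_{τ_y(x)} = τ_y τ_x τ_y, let U = ⟨ t_e | t_e² = 1, (t_x)^{t_y} = t_{τ_y(x)} ⟩ and let τ: U → G = ⟨τ_e⟩ be the canonical epimorphism. Then the kernel of τ is contained in the center of U; in particular, U is a central extension of G. -/
/-- The relators of the universal group `U(A,Ω)`: `t_e² = 1` and
`t_y t_x t_y = t_{τ_y(x)}`. -/
def uRels {Ω : Type*} (τ : Ω → Equiv.Perm Ω) : Set (FreeGroup Ω) :=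
  (Set.range fun e : Ω => FreeGroup.of e * FreeGroup.of e) ∪
  (Set.range fun p : Ω × Ω =>
    FreeGroup.of p.2 * FreeGroup.of p.1 * FreeGroup.of p.2 * (FreeGroup.of (τ p.2 p.1))⁻¹)

lemma uRel_one {Ω : Type*} (τ : Ω → Equiv.Perm Ω) {r : FreeGroup Ω} (hr : r ∈ uRels τ) :
    PresentedGroup.mk (uRels τ) r = 1 := by
  have : r ∈ Subgroup.normalClosure (uRels τ) := Subgroup.subset_normalClosure hr
  exact (QuotientGroup.eq_one_iff r).2 this

lemma of_sq {Ω : Type*} (τ : Ω → Equiv.Perm Ω) (e : Ω) :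
    (PresentedGroup.of e : PresentedGroup (uRels τ)) * PresentedGroup.of e = 1 := by
  have := uRel_one τ (Or.inl ⟨e, rfl⟩)
  simpa [PresentedGroup.of] using this

lemma of_inv {Ω : Type*} (τ : Ω → Equiv.Perm Ω) (e : Ω) :
    (PresentedGroup.of e : PresentedGroup (uRels τ))⁻¹ = PresentedGroup.of e :=
  inv_eq_of_mul_eq_one_right (of_sq τ e)

lemma of_conj {Ω : Type*} (τ : Ω → Equiv.Perm Ω) (x y : Ω) :
    (PresentedGroup.of y : PresentedGroup (uRels τ)) * PresentedGroup.of x *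
      PresentedGroup.of y = PresentedGroup.of (τ y x) := by
  have := uRel_one τ (Or.inr ⟨(x, y), rfl⟩)
  simp only [map_mul, map_inv] at this
  have h := mul_eq_one_iff_eq_inv.mp this
  simpa [PresentedGroup.of] using h

/-- the kernel of the canonical epimorphism `τ : U → G` is contained in the
center of `U`; in particular `U` is a central extension of `G`. -/
theorem stmt4 {Ω : Type*} (τ : Ω → Equiv.Perm Ω)
    (hinv : ∀ e, τ e * τ e = 1)
    (hconj : ∀ x y, τ (τ y x) = τ y * τ x * τ y)
    (f : PresentedGroup (uRels τ) →* Equiv.Perm Ω)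
    (hf : ∀ e, f (PresentedGroup.of e) = τ e) :
    f.ker ≤ Subgroup.center (PresentedGroup (uRels τ)) := by
  have key : ∀ u : PresentedGroup (uRels τ), ∀ x : Ω,
      u * PresentedGroup.of x * u⁻¹ = PresentedGroup.of (f u x) := by
    intro u
    have hu : u ∈ Subgroup.closure (Set.range (PresentedGroup.of : Ω → PresentedGroup (uRels τ))) := by
      rw [PresentedGroup.closure_range_of]; trivial
    induction hu using Subgroup.closure_induction with
    | mem g hg =>
        obtain ⟨y, rfl⟩ := hg
        intro x
        rw [of_inv, of_conj, hf]
    | one => intro x; simp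
    | mul a b _ _ ha hb =>
        intro x
        have : a * b * PresentedGroup.of x * (a * b)⁻¹
            = a * (b * PresentedGroup.of x * b⁻¹) * a⁻¹ := by group
        rw [this, hb, ha]
        simp
    | inv a _ ha =>
        intro x
        rw [map_inv]
        have h := ha ((f a)⁻¹ x)
        have h2 : (f a) ((f a)⁻¹ x) = x := by simp
        rw [h2] at h
        have : PresentedGroup.of ((f a)⁻¹ x)
            = a⁻¹ * PresentedGroup.of x * a := by
          rw [← h]; group
        rw [this]
        simp
  intro u hu
  rw [MonoidHom.mem_ker] at hu
  rw [Subgroup.mem_center_iff]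
  intro g
  have hg : g ∈ Subgroup.closure (Set.range (PresentedGroup.of : Ω → PresentedGroup (uRels τ))) := by
    rw [PresentedGroup.closure_range_of]; trivial
  induction hg using Subgroup.closure_induction with
  | mem g hg =>
      obtain ⟨y, rfl⟩ := hg
      have := key u y
      rw [hu] at this
      simp only [Equiv.Perm.coe_one, id_eq] at this
      calc PresentedGroup.of y * u = u * PresentedGroup.of y * u⁻¹ * u := by rw [this]
        _ = u * PresentedGroup.of y := by group
  | one => simp
  | mul a b _ _ ha hb => rw [mul_assoc, hb, ← mul_assoc, ha, mul_assoc]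
  | inv a _ ha =>
      calc a⁻¹ * u = a⁻¹ * u * a * a⁻¹ := by group
        _ = a⁻¹ * (a * u) * a⁻¹ := by rw [ha]; group
        _ = u * a⁻¹ := by group
end

section
/- Let Ω be a finite set with involutive permutations τ_e (e ∈ Ω) satisfying τ_{τ_y(x)} = τ_y τ_x τ_y, and let U = ⟨ t_e | t_e² = 1, (t_x)^{t_y} = t_{τ_y(x)} ⟩. Then every element of U is a product of at most |Ω| generators t_e; consequently U is a finite group. -/
section aux

variable {Ω : Type*} (τ : Ω → Equiv.Perm Ω)

lemma uSq (e : Ω) :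
    (PresentedGroup.of e : PresentedGroup (uRels τ)) * PresentedGroup.of e = 1 := by
  have : ((QuotientGroup.mk (FreeGroup.of e * FreeGroup.of e)) :
      PresentedGroup (uRels τ)) = 1 :=
    (QuotientGroup.eq_one_iff _).mpr (Subgroup.subset_normalClosure (Or.inl ⟨e, rfl⟩))
  exact this

lemma uConj (x y : Ω) :
    (PresentedGroup.of y : PresentedGroup (uRels τ)) * PresentedGroup.of x *
      PresentedGroup.of y = PresentedGroup.of (τ y x) := by
  have : ((QuotientGroup.mk (FreeGroup.of y * FreeGroup.of x * FreeGroup.of y *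
      (FreeGroup.of (τ y x))⁻¹)) : PresentedGroup (uRels τ)) = 1 :=
    (QuotientGroup.eq_one_iff _).mpr (Subgroup.subset_normalClosure (Or.inr ⟨(x, y), rfl⟩))
  simp only [QuotientGroup.mk_mul, QuotientGroup.mk_inv] at this
  have := mul_eq_one_iff_eq_inv.mp this
  rw [inv_inv] at this
  exact this

lemma uSwap (a b : Ω) :
    (PresentedGroup.of a : PresentedGroup (uRels τ)) * PresentedGroup.of b =
      PresentedGroup.of (τ a b) * PresentedGroup.of a := by
  have h := uConj τ b a
  calc PresentedGroup.of a * PresentedGroup.of b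
      = (PresentedGroup.of a * PresentedGroup.of b * PresentedGroup.of a) *
        PresentedGroup.of a := by
        rw [mul_assoc, mul_assoc, uSq, mul_one]
    _ = PresentedGroup.of (τ a b) * PresentedGroup.of a := by rw [h]

lemma uPush (a : Ω) (m : List Ω) :
    (PresentedGroup.of a : PresentedGroup (uRels τ)) *
      (m.map PresentedGroup.of).prod =
    ((m.map (τ a)).map PresentedGroup.of).prod * PresentedGroup.of a := by
  induction m with
  | nil => simp
  | cons b t ih =>
    simp only [List.map_cons, List.prod_cons]
    rw [← mul_assoc, uSwap, mul_assoc, ih, ← mul_assoc]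

lemma exists_dup {α : Type*} : ∀ {l : List α}, ¬ l.Nodup →
    ∃ a l1 l2 l3, l = l1 ++ a :: (l2 ++ a :: l3) := by
  intro l
  induction l with
  | nil => simp
  | cons b t ih =>
    intro h
    by_cases hb : b ∈ t
    · obtain ⟨s, u, rfl⟩ := List.append_of_mem hb
      exact ⟨b, [], s, u, rfl⟩
    · have ht : ¬ t.Nodup := fun hn => h (List.nodup_cons.mpr ⟨hb, hn⟩)
      obtain ⟨a, l1, l2, l3, rfl⟩ := ih ht
      exact ⟨a, b :: l1, l2, l3, rfl⟩

lemma uReduceAux : ∀ (n : ℕ) (l : List Ω), l.length ≤ n → ∃ l' : List Ω, l'.Nodup ∧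
    ((l.map PresentedGroup.of).prod : PresentedGroup (uRels τ)) =
      (l'.map PresentedGroup.of).prod := by
  intro n
  induction n using Nat.strong_induction_on with
  | _ n ih =>
    intro l hn
    by_cases h : l.Nodup
    · exact ⟨l, h, rfl⟩
    · obtain ⟨a, l1, l2, l3, rfl⟩ := exists_dup h
      have key : (((l1 ++ a :: (l2 ++ a :: l3)).map PresentedGroup.of).prod :
          PresentedGroup (uRels τ)) =
          (((l1 ++ l2.map (τ a) ++ l3).map PresentedGroup.of).prod) := by
        simp only [List.map_append, List.map_cons, List.prod_append, List.prod_cons]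
        rw [← mul_assoc (PresentedGroup.of a), uPush, mul_assoc, mul_assoc,
          ← mul_assoc (PresentedGroup.of a) (PresentedGroup.of a), uSq, one_mul]
      have hpos : 0 < n := by
        have := hn; simp at this; omega
      have hlen : (l1 ++ l2.map (τ a) ++ l3).length ≤ n - 1 := by
        have := hn; simp at this ⊢; omega
      obtain ⟨l', hnd, heq⟩ := ih (n-1) (by omega) _ hlen
      exact ⟨l', hnd, key.trans heq⟩

lemma uReduce (l : List Ω) : ∃ l' : List Ω, l'.Nodup ∧
    ((l.map PresentedGroup.of).prod : PresentedGroup (uRels τ)) =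
      (l'.map PresentedGroup.of).prod :=
  uReduceAux τ l.length l le_rfl

lemma uGen : ∀ u : PresentedGroup (uRels τ), ∃ l : List Ω,
    u = (l.map PresentedGroup.of).prod := by
  intro u
  obtain ⟨x, rfl⟩ := PresentedGroup.mk_surjective (uRels τ) u
  induction x using FreeGroup.induction_on with
  | C1 => exact ⟨[], by simp⟩
  | of x => exact ⟨[x], by simp [PresentedGroup.of]⟩
  | inv_of x _ =>
    refine ⟨[x], ?_⟩
    rw [map_inv]
    show (PresentedGroup.of x : PresentedGroup (uRels τ))⁻¹ = _
    rw [inv_eq_of_mul_eq_one_right (uSq τ x)]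
    simp
  | mul x y ihx ihy =>
    obtain ⟨lx, hx⟩ := ihx
    obtain ⟨ly, hy⟩ := ihy
    refine ⟨lx ++ ly, ?_⟩
    rw [map_mul, hx, hy]
    simp

end aux

/-- if `Ω` is finite, every element of `U` is a product of at most `|Ω|`
generators `t_e`, and consequently `U` is finite. -/
theorem stmt5 {Ω : Type*} [Fintype Ω] (τ : Ω → Equiv.Perm Ω)
    (hinv : ∀ e, τ e * τ e = 1)
    (hconj : ∀ x y, τ (τ y x) = τ y * τ x * τ y) :
    (∀ u : PresentedGroup (uRels τ), ∃ l : List Ω,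
      l.length ≤ Fintype.card Ω ∧ u = (l.map PresentedGroup.of).prod) ∧
    Finite (PresentedGroup (uRels τ)) := by
  have main : ∀ u : PresentedGroup (uRels τ), ∃ l : List Ω,
      l.length ≤ Fintype.card Ω ∧ u = (l.map PresentedGroup.of).prod := by
    intro u
    obtain ⟨l, rfl⟩ := uGen τ u
    obtain ⟨l', hnd, heq⟩ := uReduce τ l
    exact ⟨l', hnd.length_le_card, heq⟩
  refine ⟨main, ?_⟩
  have hfin : {l : List Ω | l.length ≤ Fintype.card Ω}.Finite :=
    List.finite_length_le Ω (Fintype.card Ω)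
  have : Finite {l : List Ω | l.length ≤ Fintype.card Ω} := hfin
  apply Finite.of_surjective
    (fun l : {l : List Ω | l.length ≤ Fintype.card Ω} =>
      ((l : List Ω).map PresentedGroup.of).prod)
  intro u
  obtain ⟨l, hl, hu⟩ := main u
  exact ⟨⟨l, hl⟩, hu.symm⟩
end

section
/- Let A be an axial algebra over a field with a ℤ/2ℤ-graded fusion rule and M an A-module (with eigenspace decompositions M = ⊕_φ M^e_φ satisfying the fusion rule for each axis e). For each axis x, define μ_x ∈ GL(M) acting as +1 on M^x_{Φ₊} and -1 on M^x_{Φ₋}, and τ_x the Miyamoto involution on A. Then for all m ∈ M and a ∈ A: μ_x(m · a) = μ_x(m) · τ_x(a). -/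
open Module Classical

lemma aux_sup {k M : Type*} [Field k] [AddCommGroup M] [Module k M]
    (T : Module.End k M) (S : Set k) (f : M →ₗ[k] M) (g : M →ₗ[k] M)
    (h : ∀ χ ∈ S, ∀ m ∈ Module.End.eigenspace T χ, f m = g m)
    {m : M} (hm : m ∈ ⨆ χ ∈ S, Module.End.eigenspace T χ) : f m = g m := by
  rw [← iSup_subtype'' S] at hm
  induction hm using Submodule.iSup_induction' with
  | mem χ v hv => exact h χ χ.2 v hv
  | zero => simp
  | add v w _ _ hv hw => simp [map_add, hv, hw]


/-- Lemma 3.10(i): for a module `M` over an axial algebra with a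
ℤ/2ℤ-graded fusion rule and an axis `x`, the module Miyamoto involution `μ_x` and the
algebra Miyamoto involution `τ_x` satisfy `μ_x(m · a) = μ_x(m) · τ_x(a)`. -/
theorem stmt7 {k A M : Type*} [Field k] [AddCommGroup A] [Module k A]
    [AddCommGroup M] [Module k M]
    (mul : A →ₗ[k] A →ₗ[k] A) (hcomm : ∀ a b : A, mul a b = mul b a)
    -- a ℤ/2ℤ-graded fusion rule (Φ,⋆) with Φ = Φp ⊔ Φn
    (Φp Φn : Set k) (hdisj : Disjoint Φp Φn)
    (star : k → k → Set k) (hstar_symm : ∀ φ ψ, star φ ψ = star ψ φ)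
    (hgpp : ∀ φ ∈ Φp, ∀ ψ ∈ Φp, star φ ψ ⊆ Φp)
    (hgnn : ∀ φ ∈ Φn, ∀ ψ ∈ Φn, star φ ψ ⊆ Φp)
    (hgpn : ∀ φ ∈ Φp, ∀ ψ ∈ Φn, star φ ψ ⊆ Φn)
    -- `x` is a (Φ,⋆)-axis of `A`
    (x : A) (hx : mul x x = x)
    (hAdecomp : DirectSum.IsInternal
      (fun φ : ↥(Φp ∪ Φn) => Module.End.eigenspace (mul x) (φ : k)))
    (hAfusion : ∀ φ ∈ Φp ∪ Φn, ∀ ψ ∈ Φp ∪ Φn,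
      ∀ a ∈ Module.End.eigenspace (mul x) φ, ∀ b ∈ Module.End.eigenspace (mul x) ψ,
        mul a b ∈ ⨆ χ ∈ star φ ψ, Module.End.eigenspace (mul x) χ)
    -- `M` is an `A`-module: eigenspace decomposition and fusion rule at `x`
    (act : M →ₗ[k] A →ₗ[k] M)
    (hMdecomp : DirectSum.IsInternal
      (fun φ : ↥(Φp ∪ Φn) => Module.End.eigenspace (act.flip x) (φ : k)))
    (hMfusion : ∀ φ ∈ Φp ∪ Φn, ∀ ψ ∈ Φp ∪ Φn,
      ∀ m ∈ Module.End.eigenspace (act.flip x) φ, ∀ a ∈ Module.End.eigenspace (mul x) ψ,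
        act m a ∈ ⨆ χ ∈ star φ ψ, Module.End.eigenspace (act.flip x) χ)
    -- the Miyamoto involutions `μ_x ∈ GL(M)` and `τ_x` on `A`
    (μx : M ≃ₗ[k] M)
    (hμp : ∀ φ ∈ Φp, ∀ m ∈ Module.End.eigenspace (act.flip x) φ, μx m = m)
    (hμn : ∀ φ ∈ Φn, ∀ m ∈ Module.End.eigenspace (act.flip x) φ, μx m = -m)
    (τx : A →ₗ[k] A)
    (hτp : ∀ φ ∈ Φp, ∀ a ∈ Module.End.eigenspace (mul x) φ, τx a = a)
    (hτn : ∀ φ ∈ Φn, ∀ a ∈ Module.End.eigenspace (mul x) φ, τx a = -a) :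
    ∀ (m : M) (a : A), μx (act m a) = act (μx m) (τx a) := by
  have hμid : ∀ S : Set k, S ⊆ Φp → ∀ v ∈ ⨆ χ ∈ S, Module.End.eigenspace (act.flip x) χ,
      μx v = v := by
    intro S hS v hv
    have := aux_sup (act.flip x) S (μx : M →ₗ[k] M) (LinearMap.id)
      (fun χ hχ w hw => by simpa using hμp χ (hS hχ) w hw) hv
    simpa using this
  have hμneg : ∀ S : Set k, S ⊆ Φn → ∀ v ∈ ⨆ χ ∈ S, Module.End.eigenspace (act.flip x) χ,
      μx v = -v := by
    intro S hS v hv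
    have := aux_sup (act.flip x) S (μx : M →ₗ[k] M) (-LinearMap.id)
      (fun χ hχ w hw => by simpa using hμn χ (hS hχ) w hw) hv
    simpa using this
  intro m a
  have hm : m ∈ ⨆ φ : ↥(Φp ∪ Φn), Module.End.eigenspace (act.flip x) (φ : k) := by
    rw [hMdecomp.submodule_iSup_eq_top]; trivial
  refine Submodule.iSup_induction (motive := fun m => μx (act m a) = act (μx m) (τx a))
    _ hm ?_ ?_ ?_
  · intro φ v hv
    have ha : a ∈ ⨆ ψ : ↥(Φp ∪ Φn), Module.End.eigenspace (mul x) (ψ : k) := by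
      rw [hAdecomp.submodule_iSup_eq_top]; trivial
    refine Submodule.iSup_induction (motive := fun a => μx (act v a) = act (μx v) (τx a))
      _ ha ?_ ?_ ?_
    · intro ψ b hb
      have hfus := hMfusion φ φ.2 ψ ψ.2 v hv b hb
      rcases φ.2 with hφp | hφn <;> rcases ψ.2 with hψp | hψn
      · rw [hμp φ hφp v hv, hτp ψ hψp b hb,
          hμid (star φ ψ) (hgpp φ hφp ψ hψp) _ hfus]
      · rw [hμp φ hφp v hv, hτn ψ hψn b hb,
          hμneg (star φ ψ) (hgpn φ hφp ψ hψn) _ hfus, map_neg]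
      · rw [hμn φ hφn v hv, hτp ψ hψp b hb,
          hμneg (star φ ψ) (by rw [hstar_symm]; exact hgpn ψ hψp φ hφn) _ hfus,
          map_neg, LinearMap.neg_apply]
      · rw [hμn φ hφn v hv, hτn ψ hψn b hb,
          hμid (star φ ψ) (hgnn φ hφn ψ hψn) _ hfus,
          map_neg, map_neg, LinearMap.neg_apply, neg_neg]
    · simp
    · intro b c hb hc; simp only [map_add] at *; rw [hb, hc]
  · simp
  · intro v w hv hw
    simp only [map_add, LinearMap.add_apply] at *; rw [hv, hw]
end

section
/- Let A be an axial algebra with ℤ/2ℤ-graded fusion rule and M an A-module. For axes x, y of A, with μ_x, μ_y the module Miyamoto involutions and τ_y the algebra Miyamoto involution, one has μ_y μ_x μ_y = μ_{τ_y(x)} (where τ_y(x) is again an axis). -/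
open Module Classical

section auxstmt8

variable {k M N : Type*} [Field k] [AddCommGroup M] [Module k M]
  [AddCommGroup N] [Module k N]

lemma stmt8_aux_iSup {ι : Sort*} (p : ι → Submodule k M) (f g : M →ₗ[k] N)
    (h : ∀ i, ∀ m ∈ p i, f m = g m) : ∀ m ∈ ⨆ i, p i, f m = g m := by
  intro m hm
  have hle : (⨆ i, p i) ≤ LinearMap.ker (f - g) :=
    iSup_le fun i n hn => by
      simp [LinearMap.mem_ker, sub_eq_zero, h i n hn]
  simpa [LinearMap.mem_ker, sub_eq_zero] using hle hm

lemma stmt8_aux_biSup (s : Set k) (p : k → Submodule k M) (f g : M →ₗ[k] N)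
    (h : ∀ φ ∈ s, ∀ m ∈ p φ, f m = g m) : ∀ m ∈ ⨆ φ ∈ s, p φ, f m = g m := by
  intro m hm
  have hle : (⨆ φ ∈ s, p φ) ≤ LinearMap.ker (f - g) :=
    iSup₂_le fun φ hφ n hn => by
      simp [LinearMap.mem_ker, sub_eq_zero, h φ hφ n hn]
  simpa [LinearMap.mem_ker, sub_eq_zero] using hle hm

end auxstmt8

/-- Lemma 3.10(iii): for axes `x, y` of an axial algebra with ℤ/2ℤ-graded
fusion rule and a module `M`, the module Miyamoto involutions satisfy
`μ_y μ_x μ_y = μ_{τ_y(x)}`, where `τ_y(x)` is again an axis. -/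
theorem stmt8 {k A M : Type*} [Field k] [AddCommGroup A] [Module k A]
    [AddCommGroup M] [Module k M]
    (mul : A →ₗ[k] A →ₗ[k] A) (hcomm : ∀ a b : A, mul a b = mul b a)
    -- a ℤ/2ℤ-graded fusion rule (Φ,⋆) with Φ = Φp ⊔ Φn
    (Φp Φn : Set k) (hdisj : Disjoint Φp Φn)
    (star : k → k → Set k) (hstar_symm : ∀ φ ψ, star φ ψ = star ψ φ)
    (hgpp : ∀ φ ∈ Φp, ∀ ψ ∈ Φp, star φ ψ ⊆ Φp)
    (hgnn : ∀ φ ∈ Φn, ∀ ψ ∈ Φn, star φ ψ ⊆ Φp)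
    (hgpn : ∀ φ ∈ Φp, ∀ ψ ∈ Φn, star φ ψ ⊆ Φn)
    (act : M →ₗ[k] A →ₗ[k] M)
    -- `x` and `y` are (Φ,⋆)-axes of `A` and `M` decomposes accordingly
    (x y : A) (hx : mul x x = x) (hy : mul y y = y)
    (hAdecomp : ∀ e ∈ ({x, y} : Set A), DirectSum.IsInternal
      (fun φ : ↥(Φp ∪ Φn) => Module.End.eigenspace (mul e) (φ : k)))
    (hAfusion : ∀ e ∈ ({x, y} : Set A), ∀ φ ∈ Φp ∪ Φn, ∀ ψ ∈ Φp ∪ Φn,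
      ∀ a ∈ Module.End.eigenspace (mul e) φ, ∀ b ∈ Module.End.eigenspace (mul e) ψ,
        mul a b ∈ ⨆ χ ∈ star φ ψ, Module.End.eigenspace (mul e) χ)
    (hMdecomp : ∀ e ∈ ({x, y} : Set A), DirectSum.IsInternal
      (fun φ : ↥(Φp ∪ Φn) => Module.End.eigenspace (act.flip e) (φ : k)))
    (hMfusion : ∀ e ∈ ({x, y} : Set A), ∀ φ ∈ Φp ∪ Φn, ∀ ψ ∈ Φp ∪ Φn,
      ∀ m ∈ Module.End.eigenspace (act.flip e) φ, ∀ a ∈ Module.End.eigenspace (mul e) ψ,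
        act m a ∈ ⨆ χ ∈ star φ ψ, Module.End.eigenspace (act.flip e) χ)
    -- the Miyamoto involutions `μ_x, μ_y ∈ GL(M)` and `τ_y ∈ Aut(A)`
    (μx μy : M ≃ₗ[k] M)
    (hμxp : ∀ φ ∈ Φp, ∀ m ∈ Module.End.eigenspace (act.flip x) φ, μx m = m)
    (hμxn : ∀ φ ∈ Φn, ∀ m ∈ Module.End.eigenspace (act.flip x) φ, μx m = -m)
    (hμyp : ∀ φ ∈ Φp, ∀ m ∈ Module.End.eigenspace (act.flip y) φ, μy m = m)
    (hμyn : ∀ φ ∈ Φn, ∀ m ∈ Module.End.eigenspace (act.flip y) φ, μy m = -m)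
    (τy : A →ₗ[k] A)
    (hτyp : ∀ φ ∈ Φp, ∀ a ∈ Module.End.eigenspace (mul y) φ, τy a = a)
    (hτyn : ∀ φ ∈ Φn, ∀ a ∈ Module.End.eigenspace (mul y) φ, τy a = -a)
    -- `τ_y(x)` is again an axis (Proposition 2.10) and `M` decomposes for it
    (hMdecomp' : DirectSum.IsInternal
      (fun φ : ↥(Φp ∪ Φn) => Module.End.eigenspace (act.flip (τy x)) (φ : k)))
    -- the module Miyamoto involution `μ_{τ_y(x)}`
    (μ' : M ≃ₗ[k] M)
    (hμ'p : ∀ φ ∈ Φp, ∀ m ∈ Module.End.eigenspace (act.flip (τy x)) φ, μ' m = m)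
    (hμ'n : ∀ φ ∈ Φn, ∀ m ∈ Module.End.eigenspace (act.flip (τy x)) φ, μ' m = -m) :
    ∀ m : M, μy (μx (μy m)) = μ' m := by
  have hyS : y ∈ ({x, y} : Set A) := by simp
  have hMy_top : (⨆ φ : ↥(Φp ∪ Φn), Module.End.eigenspace (act.flip y) (φ : k)) = ⊤ :=
    (hMdecomp y hyS).submodule_iSup_eq_top
  have hAy_top : (⨆ φ : ↥(Φp ∪ Φn), Module.End.eigenspace (mul y) (φ : k)) = ⊤ :=
    (hAdecomp y hyS).submodule_iSup_eq_top
  have hM'_top : (⨆ φ : ↥(Φp ∪ Φn), Module.End.eigenspace (act.flip (τy x)) (φ : k)) = ⊤ :=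
    hMdecomp'.submodule_iSup_eq_top
  -- μy is ±1 on sums of eigenspaces
  have hμyP : ∀ m ∈ ⨆ φ ∈ Φp, Module.End.eigenspace (act.flip y) φ, μy m = m := by
    intro m hm
    simpa using stmt8_aux_biSup Φp _ (μy : M →ₗ[k] M) LinearMap.id
      (fun φ hφ n hn => by simpa using hμyp φ hφ n hn) m hm
  have hμyN : ∀ m ∈ ⨆ φ ∈ Φn, Module.End.eigenspace (act.flip y) φ, μy m = -m := by
    intro m hm
    simpa using stmt8_aux_biSup Φn _ (μy : M →ₗ[k] M) (-LinearMap.id)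
      (fun φ hφ n hn => by simpa using hμyn φ hφ n hn) m hm
  -- twisted equivariance: act (μy m) (τy a) = μy (act m a)
  set B1 : M →ₗ[k] A →ₗ[k] M := ((act ∘ₗ (μy : M →ₗ[k] M)).compl₂ τy) with hB1
  set B2 : M →ₗ[k] A →ₗ[k] M := act.compr₂ (μy : M →ₗ[k] M) with hB2
  have step : ∀ ψ ∈ Φp ∪ Φn, ∀ m ∈ Module.End.eigenspace (act.flip y) ψ,
      ∀ χ ∈ Φp ∪ Φn, ∀ a ∈ Module.End.eigenspace (mul y) χ, B1 m a = B2 m a := by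
    intro ψ hψ m hm χ hχ a ha
    have hfus := hMfusion y hyS ψ hψ χ hχ m hm a ha
    rcases hψ with hψp | hψn <;> rcases hχ with hχp | hχn
    · have hmem := biSup_mono (f := fun χ' => Module.End.eigenspace (act.flip y) χ') (hgpp ψ hψp χ hχp) hfus
      simp [hB1, hB2, hμyp ψ hψp m hm, hτyp χ hχp a ha, hμyP _ hmem]
    · have hmem := biSup_mono (f := fun χ' => Module.End.eigenspace (act.flip y) χ') (hgpn ψ hψp χ hχn) hfus
      simp [hB1, hB2, hμyp ψ hψp m hm, hτyn χ hχn a ha, hμyN _ hmem]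
    · have hmem := biSup_mono (f := fun χ' => Module.End.eigenspace (act.flip y) χ') (hstar_symm χ ψ ▸ hgpn χ hχp ψ hψn) hfus
      simp [hB1, hB2, hμyn ψ hψn m hm, hτyp χ hχp a ha, hμyN _ hmem]
    · have hmem := biSup_mono (f := fun χ' => Module.End.eigenspace (act.flip y) χ') (hgnn ψ hψn χ hχn) hfus
      simp [hB1, hB2, hμyn ψ hψn m hm, hτyn χ hχn a ha, hμyP _ hmem]
  have step2 : ∀ ψ ∈ Φp ∪ Φn, ∀ m ∈ Module.End.eigenspace (act.flip y) ψ,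
      B1 m = B2 m := by
    intro ψ hψ m hm
    ext a
    exact stmt8_aux_iSup (fun φ : ↥(Φp ∪ Φn) => Module.End.eigenspace (mul y) (φ : k))
      (B1 m) (B2 m) (fun ⟨χ, hχ⟩ b hb => step ψ hψ m hm χ hχ b hb) a
      (hAy_top ▸ Submodule.mem_top)
  have key : ∀ (m : M) (a : A), act (μy m) (τy a) = μy (act m a) := by
    intro m a
    have hB : B1 m = B2 m :=
      stmt8_aux_iSup (fun φ : ↥(Φp ∪ Φn) => Module.End.eigenspace (act.flip y) (φ : k))
        B1 B2 (fun ⟨ψ, hψ⟩ n hn => step2 ψ hψ n hn) m (hMy_top ▸ Submodule.mem_top)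
    have := congrArg (fun f : A →ₗ[k] M => f a) hB
    simpa [hB1, hB2] using this
  -- τy and μy are involutions
  have hτy2 : ∀ a : A, τy (τy a) = a := by
    intro a
    refine stmt8_aux_iSup (fun φ : ↥(Φp ∪ Φn) => Module.End.eigenspace (mul y) (φ : k))
      (τy ∘ₗ τy) LinearMap.id ?_ a (hAy_top ▸ Submodule.mem_top)
    rintro ⟨φ, hφp | hφn⟩ b hb
    · simp [hτyp φ hφp b hb]
    · have hnb : -b ∈ Module.End.eigenspace (mul y) φ := neg_mem hb
      simp [hτyn φ hφn b hb, hτyn φ hφn (-b) hnb]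
  have hμy2 : ∀ m : M, μy (μy m) = m := by
    intro m
    refine stmt8_aux_iSup (fun φ : ↥(Φp ∪ Φn) => Module.End.eigenspace (act.flip y) (φ : k))
      ((μy : M →ₗ[k] M) ∘ₗ (μy : M →ₗ[k] M)) LinearMap.id ?_ m (hMy_top ▸ Submodule.mem_top)
    rintro ⟨φ, hφp | hφn⟩ b hb
    · simp [hμyp φ hφp b hb]
    · have hnb : -b ∈ Module.End.eigenspace (act.flip y) φ := neg_mem hb
      simp [hμyn φ hφn b hb, hμyn φ hφn (-b) hnb]
  -- μy maps φ-eigenvectors of τy x to φ-eigenvectors of x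
  have hmap : ∀ (φ : k), ∀ m ∈ Module.End.eigenspace (act.flip (τy x)) φ,
      μy m ∈ Module.End.eigenspace (act.flip x) φ := by
    intro φ m hm
    rw [Module.End.mem_eigenspace_iff] at hm ⊢
    have h1 : act (μy m) (τy (τy x)) = μy (act m (τy x)) := key m (τy x)
    rw [hτy2] at h1
    simp only [LinearMap.flip_apply] at hm ⊢
    rw [h1, hm, map_smul]
  -- conclusion
  have final : ∀ φ ∈ Φp ∪ Φn, ∀ m ∈ Module.End.eigenspace (act.flip (τy x)) φ,
      μy (μx (μy m)) = μ' m := by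
    intro φ hφ m hm
    have hmm := hmap φ m hm
    rcases hφ with h | h
    · rw [hμxp φ h _ hmm, hμy2, hμ'p φ h m hm]
    · rw [hμxn φ h _ hmm, map_neg, hμy2, hμ'n φ h m hm]
  intro m
  have := stmt8_aux_iSup
    (fun φ : ↥(Φp ∪ Φn) => Module.End.eigenspace (act.flip (τy x)) (φ : k))
    ((μy : M →ₗ[k] M) ∘ₗ (μx : M →ₗ[k] M) ∘ₗ (μy : M →ₗ[k] M)) (μ' : M →ₗ[k] M)
    (fun ⟨φ, hφ⟩ n hn => final φ hφ n hn) m (hM'_top ▸ Submodule.mem_top)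
  simpa using this
end

section
/- Let (P, L) be a Fischer space, k a field with char(k) ≠ 2, and α ∈ k \ {0,1}. In the Matsuo algebra M_α on basis P (with x·x = x, x·y = 0 if x ≁ y, x·y = (α/2)(x + y − x∧y) if x ∼ y), for each point x ∈ P the algebra decomposes as the direct sum of the eigenspaces of multiplication by x: the 1-eigenspace is spanned by x; the 0-eigenspace is spanned by {y + x∧y − αx : y ∼ x} together with {y : y ≁ x}; and the α-eigenspace is spanned by {y − x∧y : y ∼ x}. -/
/-- A Fischer space on a point set `P`, encoded as a partial triple system
(`collinear` and the "third point" operation `wedge`) in which every map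
`τ_x` (fixing `x` and non-collinear points and sending `y ∼ x` to `x∧y`)
is an automorphism of the geometry.  This is Buekenhout's characterization
of Fischer spaces. -/
structure FischerSpace (P : Type*) where
  collinear : P → P → Prop
  collinear_symm : ∀ {x y}, collinear x y → collinear y x
  collinear_irrefl : ∀ x, ¬ collinear x x
  wedge : P → P → P
  wedge_comm : ∀ {x y}, collinear x y → wedge x y = wedge y x
  collinear_wedge : ∀ {x y}, collinear x y → collinear x (wedge x y)
  wedge_wedge : ∀ {x y}, collinear x y → wedge x (wedge x y) = y
  wedge_ne_left : ∀ {x y}, collinear x y → wedge x y ≠ x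
  wedge_ne_right : ∀ {x y}, collinear x y → wedge x y ≠ y
  /-- the point permutation `τ_x` -/
  tau : P → P → P
  tau_of_collinear : ∀ {x y}, collinear x y → tau x y = wedge x y
  tau_of_not_collinear : ∀ {x y}, ¬ collinear x y → tau x y = y
  tau_hom_collinear : ∀ (x) {y z}, collinear y z → collinear (tau x y) (tau x z)
  tau_hom_wedge : ∀ (x) {y z}, collinear y z → tau x (wedge y z) = wedge (tau x y) (tau x z)

namespace FischerSpace

variable {P : Type*} (F : FischerSpace P)

/-- `τ_x` is an involution. -/
theorem tau_involutive (x : P) : Function.Involutive (F.tau x) := by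
  intro y
  by_cases h : F.collinear x y
  · rw [F.tau_of_collinear h, F.tau_of_collinear (F.collinear_wedge h), F.wedge_wedge h]
  · rw [F.tau_of_not_collinear h, F.tau_of_not_collinear h]

/-- `τ_x` as a permutation of the point set. -/
def tauPerm (x : P) : Equiv.Perm P := (F.tau_involutive x).toPerm

/-- A point is isolated if it is collinear with no other point. -/
def Isolated (x : P) : Prop := ∀ y, ¬ F.collinear x y

open Finsupp in
/-- The product of two basis vectors of the Matsuo algebra `M_α`. -/
noncomputable def matsuoBasisMul {k : Type*} [Field k] (α : k) (x y : P) : P →₀ k :=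
  open Classical in
  if x = y then Finsupp.single x 1
  else if F.collinear x y then
    (α / 2) • (Finsupp.single x 1 + Finsupp.single y 1 - Finsupp.single (F.wedge x y) 1)
  else 0

/-- The multiplication of the Matsuo algebra `M_α(P, L)`, as a bilinear map on the
free vector space on the point set. -/
noncomputable def matsuoMul (k : Type*) [Field k] (α : k) :
    (P →₀ k) →ₗ[k] (P →₀ k) →ₗ[k] (P →₀ k) :=
  Finsupp.lsum k fun x =>
    LinearMap.toSpanSingleton k ((P →₀ k) →ₗ[k] (P →₀ k))
      (Finsupp.lsum k fun y => LinearMap.toSpanSingleton k (P →₀ k) (F.matsuoBasisMul α x y))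

/-- The `φ`-eigenspace of (the multiplication operator by) the point `x` in the
Matsuo algebra `M_α`. -/
noncomputable def matsuoEig (k : Type*) [Field k] (α : k) (x : P) (φ : k) :
    Submodule k (P →₀ k) :=
  Module.End.eigenspace (F.matsuoMul k α (Finsupp.single x 1)) φ

end FischerSpace

namespace FischerSpace

variable {P : Type*} (F : FischerSpace P)

lemma matsuoMul_single {k : Type*} [Field k] (α : k) (y z : P) :
    F.matsuoMul k α (Finsupp.single y 1) (Finsupp.single z 1) = F.matsuoBasisMul α y z := by
  simp [FischerSpace.matsuoMul, Finsupp.lsum_single, LinearMap.toSpanSingleton_apply]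

lemma mbm_self {k : Type*} [Field k] (α : k) (x : P) :
    F.matsuoBasisMul α x x = Finsupp.single x 1 := by
  simp [matsuoBasisMul]

lemma mbm_col {k : Type*} [Field k] (α : k) {x y : P} (h : F.collinear x y) :
    F.matsuoBasisMul α x y
      = (α / 2) • (Finsupp.single x 1 + Finsupp.single y 1
          - Finsupp.single (F.wedge x y) (1 : k)) := by
  have hne : x ≠ y := fun e => F.collinear_irrefl x (e ▸ h)
  simp [matsuoBasisMul, hne, h]

lemma mbm_not {k : Type*} [Field k] (α : k) {x y : P} (hne : x ≠ y)
    (h : ¬ F.collinear x y) : F.matsuoBasisMul α x y = 0 := by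
  simp [matsuoBasisMul, hne, h]

end FischerSpace

theorem aux_span_eq {R M : Type*} [Ring R] [AddCommGroup M] [Module R M] {ι : Type*}
    (p q : ι → Submodule R M) (hle : ∀ i, p i ≤ q i) (hq : iSupIndep q)
    (hp : ⨆ i, p i = ⊤) (i : ι) : p i = q i := by
  refine le_antisymm (hle i) ?_
  have hsplit : (⨆ j, p j) = p i ⊔ ⨆ j, ⨆ _ : j ≠ i, p j := by
    rw [iSup_split p (fun j => j = i)]
    congr 1
    exact iSup_iSup_eq_left
  calc q i = q i ⊓ (⨆ j, p j) := by rw [hp, inf_top_eq]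
    _ = (p i ⊔ ⨆ j, ⨆ _ : j ≠ i, p j) ⊓ q i := by rw [hsplit, inf_comm]
    _ = p i ⊔ ((⨆ j, ⨆ _ : j ≠ i, p j) ⊓ q i) := sup_inf_assoc_of_le _ (hle i)
    _ ≤ p i ⊔ ((⨆ j, ⨆ _ : j ≠ i, q j) ⊓ q i) :=
        sup_le_sup_left (inf_le_inf_right _ (iSup_mono fun j => iSup_mono fun _ => hle j)) _
    _ = p i ⊔ ⊥ := by rw [(hq i).symm.eq_bot]
    _ = p i := sup_bot_eq _


open FischerSpace Finsupp Classical in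
/-- Proposition 4.8: the eigenspace decomposition of a Matsuo algebra with
respect to a point `x`. -/
theorem stmt10 {P : Type*} (F : FischerSpace P) {k : Type*} [Field k]
    (hchar : (2 : k) ≠ 0) (α : k) (hα0 : α ≠ 0) (hα1 : α ≠ 1) (x : P) :
    F.matsuoEig k α x 1 = Submodule.span k {Finsupp.single x 1} ∧
    F.matsuoEig k α x 0 = Submodule.span k
      (((fun y => Finsupp.single y 1 + Finsupp.single (F.wedge x y) 1 - α • Finsupp.single x 1) ''
          {y | F.collinear x y}) ∪
        ((fun y => Finsupp.single y (1 : k)) '' {y | y ≠ x ∧ ¬ F.collinear x y})) ∧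
    F.matsuoEig k α x α = Submodule.span k
      ((fun y => Finsupp.single y (1 : k) - Finsupp.single (F.wedge x y) 1) ''
        {y | F.collinear x y}) ∧
    DirectSum.IsInternal
      (fun i : Fin 3 => ![F.matsuoEig k α x 1, F.matsuoEig k α x 0, F.matsuoEig k α x α] i) := by
  classical
  set L : Module.End k (P →₀ k) := F.matsuoMul k α (Finsupp.single x 1) with hLdef
  have hmul : ∀ z : P, L (Finsupp.single z 1) = F.matsuoBasisMul α x z := fun z =>
    F.matsuoMul_single α x z
  set μ : Fin 3 → k := ![1, 0, α] with hμ
  set q : Fin 3 → Submodule k (P →₀ k) := fun i => Module.End.eigenspace L (μ i) with hqdef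
  set S1 : Submodule k (P →₀ k) := Submodule.span k {Finsupp.single x 1} with hS1
  set S0 : Submodule k (P →₀ k) := Submodule.span k
      (((fun y => Finsupp.single y 1 + Finsupp.single (F.wedge x y) 1 - α • Finsupp.single x 1) ''
          {y | F.collinear x y}) ∪
        ((fun y => Finsupp.single y (1 : k)) '' {y | y ≠ x ∧ ¬ F.collinear x y})) with hS0
  set Sa : Submodule k (P →₀ k) := Submodule.span k
      ((fun y => Finsupp.single y (1 : k) - Finsupp.single (F.wedge x y) 1) ''
        {y | F.collinear x y}) with hSa
  set p : Fin 3 → Submodule k (P →₀ k) := ![S1, S0, Sa] with hpdef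
  have hp0 : p 0 = S1 := rfl
  have hp1 : p 1 = S0 := rfl
  have hp2 : p 2 = Sa := rfl
  -- the generators are eigenvectors
  have h1 : S1 ≤ q 0 := by
    rw [hS1, Submodule.span_le, Set.singleton_subset_iff, SetLike.mem_coe,
      Module.End.mem_eigenspace_iff]
    rw [hmul, F.mbm_self, show μ 0 = 1 from rfl, one_smul]
  have h0 : S0 ≤ q 1 := by
    rw [hS0, Submodule.span_le]
    rintro v (⟨y, hy, rfl⟩ | ⟨y, ⟨hyx, hyc⟩, rfl⟩)
    · have hcol : F.collinear x y := hy
      have hcw : F.collinear x (F.wedge x y) := F.collinear_wedge hcol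
      have hww : F.wedge x (F.wedge x y) = y := F.wedge_wedge hcol
      rw [SetLike.mem_coe, Module.End.mem_eigenspace_iff, show μ 1 = 0 from rfl]
      rw [map_sub, map_add, map_smul, hmul, hmul, hmul, F.mbm_self, F.mbm_col α hcol,
        F.mbm_col α hcw, hww, zero_smul]
      match_scalars <;> field_simp <;> ring
    · rw [SetLike.mem_coe, Module.End.mem_eigenspace_iff, show μ 1 = 0 from rfl,
        hmul, F.mbm_not α (Ne.symm hyx) hyc, zero_smul]
  have h2 : Sa ≤ q 2 := by
    rw [hSa, Submodule.span_le]
    rintro v ⟨y, hy, rfl⟩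
    have hcol : F.collinear x y := hy
    have hcw : F.collinear x (F.wedge x y) := F.collinear_wedge hcol
    have hww : F.wedge x (F.wedge x y) = y := F.wedge_wedge hcol
    rw [SetLike.mem_coe, Module.End.mem_eigenspace_iff, show μ 2 = α from rfl]
    rw [map_sub, hmul, hmul, F.mbm_col α hcol, F.mbm_col α hcw, hww]
    match_scalars <;> field_simp <;> ring
  have hle : ∀ i, p i ≤ q i := by
    intro i
    fin_cases i
    · exact h1
    · exact h0
    · exact h2
  have hsup : ⨆ i, p i = ⊤ := by
    rw [eq_top_iff, ← (Finsupp.basisSingleOne (R := k) (ι := P)).span_eq, Submodule.span_le]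
    rintro _ ⟨y, rfl⟩
    rw [Finsupp.coe_basisSingleOne]
    show Finsupp.single y (1 : k) ∈ (⨆ i, p i : Submodule k (P →₀ k))
    by_cases hyx : y = x
    · subst hyx
      exact Submodule.mem_iSup_of_mem 0 (Submodule.mem_span_singleton_self _)
    by_cases hcol : F.collinear x y
    · have hkey : Finsupp.single y (1 : k)
          = (1 / 2 : k) • (Finsupp.single y 1 + Finsupp.single (F.wedge x y) 1
              - α • Finsupp.single x 1)
            + (1 / 2 : k) • (Finsupp.single y (1 : k) - Finsupp.single (F.wedge x y) 1)
            + (α / 2) • Finsupp.single x (1 : k) := by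
        match_scalars <;> field_simp <;> ring
      rw [hkey]
      refine add_mem (add_mem ?_ ?_) ?_
      · exact Submodule.mem_iSup_of_mem 1
          (Submodule.smul_mem _ _ (Submodule.subset_span (Or.inl ⟨y, hcol, rfl⟩)))
      · exact Submodule.mem_iSup_of_mem 2
          (Submodule.smul_mem _ _ (Submodule.subset_span ⟨y, hcol, rfl⟩))
      · exact Submodule.mem_iSup_of_mem 0
          (Submodule.smul_mem _ _ (Submodule.mem_span_singleton_self _))
    · exact Submodule.mem_iSup_of_mem 1
        (Submodule.subset_span (Or.inr ⟨y, ⟨hyx, hcol⟩, rfl⟩))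
  have hinj : Function.Injective μ := by
    intro i j h
    fin_cases i <;> fin_cases j <;>
      first
        | rfl
        | exact absurd h one_ne_zero
        | exact absurd h zero_ne_one
        | exact absurd h hα1
        | exact absurd h hα0
        | exact absurd h (Ne.symm hα1)
        | exact absurd h (Ne.symm hα0)
  have hqindep : iSupIndep q := (Module.End.eigenspaces_iSupIndep L).comp hinj
  have heq : ∀ i, p i = q i := aux_span_eq p q hle hqindep hsup
  have hsupq : ⨆ i, q i = ⊤ := eq_top_iff.mpr (hsup ▸ iSup_mono hle)
  have hq_eq : (fun i : Fin 3 =>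
      ![F.matsuoEig k α x 1, F.matsuoEig k α x 0, F.matsuoEig k α x α] i) = q := by
    funext i; fin_cases i <;> rfl
  refine ⟨(heq 0).symm, (heq 1).symm, (heq 2).symm, ?_⟩
  rw [hq_eq]
  exact (DirectSum.isInternal_submodule_iff_iSupIndep_and_iSup_eq_top q).mpr ⟨hqindep, hsupq⟩
end

section
/- Let (P, L) be a Fischer space without isolated points, and M_α its Matsuo algebra over a field of characteristic ≠ 2 with α ∉ {0,1}. For each point x ∈ P, the Miyamoto involution τ_x ∈ Aut(M_α) (acting as +1 on the 1- and 0-eigenspaces of x and as -1 on the α-eigenspace) satisfies, for all points y: τ_x(y) = x∧y if y ∼ x, and τ_x(y) = y if y ≁ x or y = x. -/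
open FischerSpace Finsupp Classical in
/-- Proposition 4.10(ii): the Miyamoto involution `τ_x` of the Matsuo
algebra of a Fischer space without isolated points permutes the basis vectors by
`y ↦ x∧y` if `y ∼ x` and fixes them otherwise. -/
theorem stmt11 {P : Type*} (F : FischerSpace P)
    (hiso : ∀ p : P, ¬ F.Isolated p)
    {k : Type*} [Field k] (hchar : (2 : k) ≠ 0) (α : k) (hα0 : α ≠ 0) (hα1 : α ≠ 1)
    (x : P) (f : (P →₀ k) ≃ₗ[k] (P →₀ k))
    (hmul : ∀ a b, f (F.matsuoMul k α a b) = F.matsuoMul k α (f a) (f b))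
    (h1 : ∀ a ∈ F.matsuoEig k α x 1, f a = a)
    (h0 : ∀ a ∈ F.matsuoEig k α x 0, f a = a)
    (hα : ∀ a ∈ F.matsuoEig k α x α, f a = -a) :
    ∀ y : P, f (Finsupp.single y 1) =
      if F.collinear x y then Finsupp.single (F.wedge x y) 1 else Finsupp.single y 1 := by

  have key : ∀ a b : P, F.matsuoMul k α (Finsupp.single a 1) (Finsupp.single b 1) =
      F.matsuoBasisMul α a b := by
    intro a b
    simp [FischerSpace.matsuoMul]
  intro y
  by_cases hxy : F.collinear x y
  · have hz := F.collinear_wedge hxy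
    have hwz : F.wedge x (F.wedge x y) = y := F.wedge_wedge hxy
    have hxney : x ≠ y := fun h => F.collinear_irrefl x (h ▸ hxy)
    have hxnez : x ≠ F.wedge x y := fun h => (F.wedge_ne_left hxy) h.symm
    set z := F.wedge x y with hzdef
    set X : P →₀ k := Finsupp.single x 1 with hX
    set Y : P →₀ k := Finsupp.single y 1 with hY
    set Z : P →₀ k := Finsupp.single z 1 with hZ
    have TX : F.matsuoMul k α X X = X := by
      rw [hX, key]; simp [FischerSpace.matsuoBasisMul]
    have TY : F.matsuoMul k α X Y = (α/2) • (X + Y - Z) := by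
      rw [hX, hY, hZ, key]; simp [FischerSpace.matsuoBasisMul, hxney, hxy, ← hzdef]
    have TZ : F.matsuoMul k α X Z = (α/2) • (X + Z - Y) := by
      rw [hX, hZ, hY, key]; simp [FischerSpace.matsuoBasisMul, hxnez, hz, hwz]
    have hw : X ∈ F.matsuoEig k α x 1 := by
      rw [FischerSpace.matsuoEig, Module.End.mem_eigenspace_iff, TX, one_smul]
    have hu : (Y + Z - α • X) ∈ F.matsuoEig k α x 0 := by
      rw [FischerSpace.matsuoEig, Module.End.mem_eigenspace_iff]
      rw [map_sub, map_add, map_smul, TX, TY, TZ]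
      match_scalars <;> (field_simp; try ring)
    have hv : (Y - Z) ∈ F.matsuoEig k α x α := by
      rw [FischerSpace.matsuoEig, Module.End.mem_eigenspace_iff]
      rw [map_sub, TY, TZ]
      match_scalars <;> (field_simp; try ring)
    have hdecomp : Y = (1/2 : k) • (Y + Z - α • X) + (1/2 : k) • (Y - Z) + (α/2) • X := by
      match_scalars <;> (field_simp; try ring)
    have fu := h0 _ hu
    have fv := hα _ hv
    have fX := h1 _ hw
    rw [if_pos hxy]
    rw [hdecomp, map_add, map_add, map_smul, map_smul, map_smul, fu, fv, fX]
    match_scalars <;> (field_simp; try ring)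
  · rw [if_neg hxy]
    by_cases hxy2 : x = y
    · subst hxy2
      apply h1
      rw [FischerSpace.matsuoEig, Module.End.mem_eigenspace_iff, key, one_smul]
      simp [FischerSpace.matsuoBasisMul]
    · apply h0
      rw [FischerSpace.matsuoEig, Module.End.mem_eigenspace_iff, key, zero_smul]
      simp [FischerSpace.matsuoBasisMul, hxy2, hxy]
end

section
/- Let (P, L) be a Fischer space without isolated points and M_α its Matsuo algebra. Then the map x ↦ τ_x from points to Miyamoto involutions is injective: if τ_x = τ_y as automorphisms of M_α, then x = y. -/
open FischerSpace Finsupp in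
/-- Proposition 4.10(iii): for a Fischer space without isolated points,
the map sending a point `x` to the Miyamoto involution `τ_x` of the Matsuo algebra
(the linear extension of the point permutation `τ_x`) is injective. -/
theorem stmt12 {P : Type*} (F : FischerSpace P)
    (hiso : ∀ p : P, ¬ F.Isolated p)
    {k : Type*} [Field k] (hchar : (2 : k) ≠ 0) (α : k) (hα0 : α ≠ 0) (hα1 : α ≠ 1) :
    Function.Injective
      (fun x : P => (Finsupp.lmapDomain k k (F.tau x) : (P →₀ k) →ₗ[k] (P →₀ k))) := by
  intro x y h
  have hp : ∀ p, F.tau x p = F.tau y p := by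
    intro p
    have h2 := congrArg (fun f : (P →₀ k) →ₗ[k] (P →₀ k) => f (Finsupp.single p (1:k))) h
    simp only [Finsupp.lmapDomain_apply, Finsupp.mapDomain_single] at h2
    exact (Finsupp.single_left_inj one_ne_zero).mp h2
  by_contra hxy
  by_cases hc : F.collinear x y
  · have h1 : F.tau x y = F.wedge x y := F.tau_of_collinear hc
    have h2 : F.tau y y = y := F.tau_of_not_collinear (F.collinear_irrefl y)
    exact F.wedge_ne_right hc (by rw [← h1, hp, h2])
  · have : ¬ ∀ z, ¬ F.collinear x z := hiso x
    push_neg at this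
    obtain ⟨z, hzx⟩ := this
    have hyz : F.collinear y z := by
      by_contra hyzn
      have h2 := hp z
      rw [F.tau_of_collinear hzx, F.tau_of_not_collinear hyzn] at h2
      exact F.wedge_ne_right hzx h2
    have hw : F.wedge x z = F.wedge y z := by
      have h2 := hp z
      rwa [F.tau_of_collinear hzx, F.tau_of_collinear hyz] at h2
    apply hxy
    apply (F.tau_involutive z).injective
    rw [F.tau_of_collinear (F.collinear_symm hzx), F.tau_of_collinear (F.collinear_symm hyz),
        ← F.wedge_comm hzx, ← F.wedge_comm hyz, hw]
end

section
/- Let (P, L) be a connected Fischer space with point set P and Matsuo algebra M_α over a field k (char k ≠ 2, α ∉ {0,1}). The symmetric bilinear form on M_α defined on the basis by ⟨x,x⟩ = 1, ⟨x,y⟩ = α/2 if x ∼ y, and ⟨x,y⟩ = 0 if x ≁ y, is a Frobenius form: ⟨ab, c⟩ = ⟨b, ac⟩ for all a, b, c ∈ M_α. -/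
open Classical in
/-- The bilinear form on the Matsuo algebra given on the basis by `⟨x,x⟩ = 1`,
`⟨x,y⟩ = α/2` if `x ∼ y` and `⟨x,y⟩ = 0` otherwise. -/
noncomputable def matsuoForm {P : Type*} (F : FischerSpace P) (k : Type*) [Field k]
    (α : k) : (P →₀ k) →ₗ[k] (P →₀ k) →ₗ[k] k :=
  Finsupp.lsum k fun x =>
    LinearMap.toSpanSingleton k ((P →₀ k) →ₗ[k] k)
      (Finsupp.lsum k fun y =>
        LinearMap.toSpanSingleton k k
          (if x = y then 1 else if F.collinear x y then α / 2 else 0))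


open Finsupp Classical

noncomputable def bfun {P : Type*} (F : FischerSpace P) (k : Type*) [Field k] (α : k) (x y : P) : k :=
  if x = y then 1 else if F.collinear x y then α / 2 else 0

section Aux
variable {P : Type*} (F : FischerSpace P) {k : Type*} [Field k] (α : k)

lemma form_single (x y : P) :
    matsuoForm F k α (Finsupp.single x 1) (Finsupp.single y 1) = bfun F k α x y := by
  simp [matsuoForm, bfun, Finsupp.lsum_single, LinearMap.toSpanSingleton_apply_one]

lemma mul_single (x y : P) :
    F.matsuoMul k α (Finsupp.single x 1) (Finsupp.single y 1) = F.matsuoBasisMul α x y := by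
  simp [FischerSpace.matsuoMul, Finsupp.lsum_single, LinearMap.toSpanSingleton_apply_one]

lemma basisMul_self (x : P) : F.matsuoBasisMul α x x = Finsupp.single x 1 := by
  simp [FischerSpace.matsuoBasisMul]

lemma basisMul_of_collinear {x y : P} (hne : x ≠ y) (h : F.collinear x y) :
    F.matsuoBasisMul α x y
      = (α / 2) • (Finsupp.single x 1 + Finsupp.single y 1 - Finsupp.single (F.wedge x y) 1) := by
  rw [FischerSpace.matsuoBasisMul, if_neg hne, if_pos h]

lemma basisMul_of_not_collinear {x y : P} (hne : x ≠ y) (h : ¬ F.collinear x y) :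
    F.matsuoBasisMul α x y = 0 := by
  rw [FischerSpace.matsuoBasisMul, if_neg hne, if_neg h]

lemma tau_wedge_self {x y : P} (h : F.collinear x y) : F.tau x (F.wedge x y) = y := by
  rw [F.tau_of_collinear (F.collinear_wedge h), F.wedge_wedge h]

lemma collinear_wedge_iff' {x y z : P} (hxy : F.collinear x y) (hxz : F.collinear x z) :
    F.collinear (F.wedge x y) z ↔ F.collinear y (F.wedge x z) := by
  constructor
  · intro h
    have h2 := F.tau_hom_collinear x h
    rwa [tau_wedge_self F hxy, F.tau_of_collinear hxz] at h2
  · intro h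
    have h2 := F.tau_hom_collinear x h
    rwa [F.tau_of_collinear hxy, tau_wedge_self F hxz] at h2

lemma wedge_eq_iff' {x y z : P} (hxy : F.collinear x y) (hxz : F.collinear x z) :
    F.wedge x y = z ↔ y = F.wedge x z := by
  constructor
  · intro h; rw [← h, F.wedge_wedge hxy]
  · intro h; rw [h, F.wedge_wedge hxz]

lemma collinear_tau_iff {x y z : P} (hxy : F.collinear x y) (hxz : ¬ F.collinear x z) :
    F.collinear y z ↔ F.collinear (F.wedge x y) z := by
  constructor
  · intro h
    have h2 := F.tau_hom_collinear x h
    rwa [F.tau_of_collinear hxy, F.tau_of_not_collinear hxz] at h2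
  · intro h
    have h2 := F.tau_hom_collinear x h
    rwa [tau_wedge_self F hxy, F.tau_of_not_collinear hxz] at h2

lemma key (x y z : P) :
    matsuoForm F k α (F.matsuoMul k α (Finsupp.single x 1) (Finsupp.single y 1))
        (Finsupp.single z 1)
      = matsuoForm F k α (Finsupp.single y 1)
        (F.matsuoMul k α (Finsupp.single x 1) (Finsupp.single z 1)) := by
  rw [mul_single, mul_single]
  by_cases hxy : x = y
  · subst hxy
    by_cases hxz : x = z
    · subst hxz; rw [basisMul_self]
    · rw [basisMul_self]
      by_cases hc : F.collinear x z
      · rw [basisMul_of_collinear F α hxz hc]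
        have h1 : x ≠ F.wedge x z := Ne.symm (F.wedge_ne_left hc)
        have h2 : F.collinear x (F.wedge x z) := F.collinear_wedge hc
        simp only [map_smul, map_add, map_sub, LinearMap.smul_apply, LinearMap.add_apply,
          LinearMap.sub_apply, smul_eq_mul, form_single]
        simp only [bfun, if_pos rfl, if_true, eq_self_iff_true, if_neg hxz, if_pos hc, if_neg h1, if_pos h2]
        ring
      · rw [basisMul_of_not_collinear F α hxz hc]
        simp only [map_zero, form_single, bfun, if_neg hxz, if_neg hc]
  · by_cases hxz : x = z
    · subst hxz
      rw [basisMul_self]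
      by_cases hc : F.collinear x y
      · rw [basisMul_of_collinear F α hxy hc]
        have h1 : F.wedge x y ≠ x := F.wedge_ne_left hc
        have h2 : F.collinear (F.wedge x y) x := F.collinear_symm (F.collinear_wedge hc)
        have h3 : y ≠ x := Ne.symm hxy
        have h4 : F.collinear y x := F.collinear_symm hc
        simp only [map_smul, map_add, map_sub, LinearMap.smul_apply, LinearMap.add_apply,
          LinearMap.sub_apply, smul_eq_mul, form_single]
        simp only [bfun, if_pos rfl, if_true, eq_self_iff_true, if_neg h1, if_pos h2, if_neg h3, if_pos h4]
        ring
      · rw [basisMul_of_not_collinear F α hxy hc]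
        have h3 : y ≠ x := Ne.symm hxy
        have h4 : ¬ F.collinear y x := fun h => hc (F.collinear_symm h)
        simp only [map_zero, LinearMap.zero_apply, form_single, bfun, if_neg h3, if_neg h4]
    · -- x ≠ y, x ≠ z
      by_cases hcy : F.collinear x y <;> by_cases hcz : F.collinear x z
      · rw [basisMul_of_collinear F α hxy hcy, basisMul_of_collinear F α hxz hcz]
        simp only [map_smul, map_add, map_sub, LinearMap.smul_apply, LinearMap.add_apply,
          LinearMap.sub_apply, smul_eq_mul, form_single]
        have e1 : bfun F k α x z = α / 2 := by simp only [bfun, if_neg hxz, if_pos hcz]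
        have e2 : bfun F k α y x = α / 2 := by
          simp only [bfun, if_neg (Ne.symm hxy), if_pos (F.collinear_symm hcy)]
        have e3 : bfun F k α (F.wedge x y) z = bfun F k α y (F.wedge x z) := by
          by_cases hw : F.wedge x y = z
          · have hw2 : y = F.wedge x z := (wedge_eq_iff' F hcy hcz).mp hw
            simp only [bfun, if_pos hw, if_pos hw2]
          · have hw2 : y ≠ F.wedge x z := fun h => hw ((wedge_eq_iff' F hcy hcz).mpr h)
            by_cases hcw : F.collinear (F.wedge x y) z
            · have hcw2 : F.collinear y (F.wedge x z) := (collinear_wedge_iff' F hcy hcz).mp hcw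
              simp only [bfun, if_neg hw, if_neg hw2, if_pos hcw, if_pos hcw2]
            · have hcw2 : ¬ F.collinear y (F.wedge x z) :=
                fun h => hcw ((collinear_wedge_iff' F hcy hcz).mpr h)
              simp only [bfun, if_neg hw, if_neg hw2, if_neg hcw, if_neg hcw2]
        rw [e1, e2, e3]
      · rw [basisMul_of_collinear F α hxy hcy, basisMul_of_not_collinear F α hxz hcz]
        have e1 : bfun F k α x z = 0 := by simp only [bfun, if_neg hxz, if_neg hcz]
        have hyz : y ≠ z := fun h => hcz (h ▸ hcy)
        have hwz : F.wedge x y ≠ z := fun h => hcz (h ▸ F.collinear_wedge hcy)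
        have e3 : bfun F k α (F.wedge x y) z = bfun F k α y z := by
          by_cases hc : F.collinear y z
          · have hc2 : F.collinear (F.wedge x y) z := (collinear_tau_iff F hcy hcz).mp hc
            simp only [bfun, if_neg hwz, if_neg hyz, if_pos hc, if_pos hc2]
          · have hc2 : ¬ F.collinear (F.wedge x y) z :=
              fun h => hc ((collinear_tau_iff F hcy hcz).mpr h)
            simp only [bfun, if_neg hwz, if_neg hyz, if_neg hc, if_neg hc2]
        simp only [map_smul, map_add, map_sub, map_zero, LinearMap.smul_apply,
          LinearMap.add_apply, LinearMap.sub_apply, smul_eq_mul, form_single, e1, e3]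
        ring
      · rw [basisMul_of_not_collinear F α hxy hcy, basisMul_of_collinear F α hxz hcz]
        have e1 : bfun F k α y x = 0 := by
          simp only [bfun, if_neg (Ne.symm hxy), if_neg (fun h => hcy (F.collinear_symm h))]
        have hyz : y ≠ z := fun h => hcy (h ▸ hcz)
        have hwz : y ≠ F.wedge x z := fun h => hcy (h ▸ F.collinear_wedge hcz)
        have e3 : bfun F k α y (F.wedge x z) = bfun F k α y z := by
          by_cases hc : F.collinear y z
          · have hc' : F.collinear z y := F.collinear_symm hc
            have hc2 : F.collinear (F.wedge x z) y := (collinear_tau_iff F hcz hcy).mp hc'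
            simp only [bfun, if_neg hwz, if_neg hyz, if_pos hc, if_pos (F.collinear_symm hc2)]
          · have hc2 : ¬ F.collinear (F.wedge x z) y :=
              fun h => hc (F.collinear_symm ((collinear_tau_iff F hcz hcy).mpr h))
            simp only [bfun, if_neg hwz, if_neg hyz, if_neg hc,
              if_neg (fun h => hc2 (F.collinear_symm h))]
        simp only [map_smul, map_add, map_sub, map_zero, LinearMap.zero_apply,
          LinearMap.smul_apply, LinearMap.add_apply, LinearMap.sub_apply, smul_eq_mul,
          form_single, e1, e3]
        ring
      · rw [basisMul_of_not_collinear F α hxy hcy, basisMul_of_not_collinear F α hxz hcz]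
        simp

lemma single_eq_smul (p : P) (c : k) : Finsupp.single p c = c • Finsupp.single p 1 := by
  rw [Finsupp.smul_single', mul_one]

end Aux

/-- Lemma 5.9: the bilinear form above is a Frobenius form for the Matsuo
algebra of a connected Fischer space: `⟨ab, c⟩ = ⟨b, ac⟩`. -/
theorem stmt18 {P : Type*} (F : FischerSpace P)
    (hconn : ∀ x y : P, Relation.ReflTransGen F.collinear x y)
    {k : Type*} [Field k] (hchar : (2 : k) ≠ 0) (α : k) (hα0 : α ≠ 0) (hα1 : α ≠ 1) :
    ∀ a b c : P →₀ k,
      matsuoForm F k α (F.matsuoMul k α a b) c = matsuoForm F k α b (F.matsuoMul k α a c) := by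
  intro a b c
  induction a using Finsupp.induction_linear with
  | zero => simp
  | add f g hf hg => simp only [map_add, LinearMap.add_apply, hf, hg]
  | single p cp =>
    induction b using Finsupp.induction_linear with
    | zero => simp
    | add f g hf hg => simp only [map_add, LinearMap.add_apply, hf, hg]
    | single q cq =>
      induction c using Finsupp.induction_linear with
      | zero => simp
      | add f g hf hg => simp only [map_add, hf, hg]
      | single r cr =>
        rw [single_eq_smul p cp, single_eq_smul q cq, single_eq_smul r cr]
        simp only [map_smul, LinearMap.smul_apply, smul_eq_mul, key F α]
        ring
end
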